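/- Assume the social graph G is connected and is not a star graph, and that the graph G_s is ε-trivial (i.e., |x_i(s) − x_j(s)| ≤ ε for all i, j ∈ [n]) at some time s ≥ 0. Then x_i(t) converges to (1/n) ∑_{k ∈ [n]} x_k(0) as t → ∞, for every i ∈ [n]. -/

import Mathlib

open Finset
open scoped Classical

/-- The threshold graph `G_t`: social neighbors whose garbage differs by at most `ε`. -/
def Gt {n : ℕ} (G : SimpleGraph (Fin n)) (x : ℕ → Fin n → ℝ) (ε : ℝ) (t : ℕ) :
    SimpleGraph (Fin n) where
  Adj i j := G.Adj i j ∧ |x t i - x t j| ≤ ε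
  symm := by
    constructor
    intro i j h
    exact ⟨h.1.symm, by rw [abs_sub_comm]; exact h.2⟩
  loopless := by
    constructor
    intro i h
    exact G.irrefl h.1

/-- `|E_t|`: the number of edges of `G_t`. -/
noncomputable def Ecard {n : ℕ} (G : SimpleGraph (Fin n)) (x : ℕ → Fin n → ℝ) (ε : ℝ)
    (t : ℕ) : ℕ :=
  (Gt G x ε t).edgeSet.ncard

/-- `N_i(t)`: the neighbors of `i` in `G_t`, as a finset. -/
noncomputable def Nb {n : ℕ} (G : SimpleGraph (Fin n)) (x : ℕ → Fin n → ℝ) (ε : ℝ)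
    (t : ℕ) (i : Fin n) : Finset (Fin n) :=
  Finset.univ.filter fun j => (Gt G x ε t).Adj i j

/-- The update rule of the garbage disposal game. -/
def Update {n : ℕ} (G : SimpleGraph (Fin n)) (x : ℕ → Fin n → ℝ) (ε : ℝ) : Prop :=
  ∀ t i,
    x (t + 1) i =
      (if (Gt G x ε t).edgeSet.Nonempty then (1 : ℝ) else 0) / (Ecard G x ε t : ℝ) *
          ∑ j ∈ Nb G x ε t i, x t j +
        (1 - ((Nb G x ε t i).card : ℝ) / (Ecard G x ε t : ℝ) *
            (if (Gt G x ε t).edgeSet.Nonempty then (1 : ℝ) else 0)) * x t i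

/-- The Lyapunov functional `Z_t`. -/
noncomputable def Z {n : ℕ} (G : SimpleGraph (Fin n)) (x : ℕ → Fin n → ℝ) (ε : ℝ)
    (t : ℕ) : ℝ :=
  ∑ i, ∑ j,
    max (min (ε ^ 2) ((x t i - x t j) ^ 2)) (ε ^ 2 * if ¬ G.Adj i j then 1 else 0)

/-- `G` is a star graph: some center `c` is adjacent to exactly the other vertices,
and there are no other edges. -/
def IsStar {n : ℕ} (G : SimpleGraph (Fin n)) : Prop :=
  ∃ c : Fin n, ∀ i j : Fin n, G.Adj i j ↔ (i = c ∨ j = c) ∧ i ≠ j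

/-!
Once every social edge is within the threshold, the update is multiplication by the fixed
matrix `P = 1 - |E|⁻¹ L`, `L` the Laplacian of `G`. `P` is row-stochastic, so the spread
`max x - min x` never grows and the threshold graph stays equal to `G`. On a connected graph
that is not a star every degree is less than `|E|`, so `P` has a positive diagonal and, walking
along shortest paths, every entry of `Pⁿ` is at least `|E|⁻ⁿ`; hence `Pⁿ` shrinks the spread by
a fixed factor `< 1`. As `L` has zero column sums the total is conserved, and the average, lying
between the minimum and the maximum, is the limit of every coordinate.
-/

open Matrix Filter Topology

section Spread

variable {ι : Type*} [Fintype ι] [Nonempty ι]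

noncomputable def spread (y : ι → ℝ) : ℝ :=
  univ.sup' univ_nonempty y - univ.inf' univ_nonempty y

lemma spread_nonneg (y : ι → ℝ) : 0 ≤ spread y := by
  obtain ⟨i⟩ := ‹Nonempty ι›
  exact sub_nonneg.2 ((inf'_le y (mem_univ i)).trans (le_sup' y (mem_univ i)))

lemma abs_sub_le_spread (y : ι → ℝ) (i j : ι) : |y i - y j| ≤ spread y :=
  abs_sub_le_iff.2 ⟨sub_le_sub (le_sup' y (mem_univ i)) (inf'_le y (mem_univ j)),
    sub_le_sub (le_sup' y (mem_univ j)) (inf'_le y (mem_univ i))⟩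

lemma spread_le_of_abs_sub_le {y : ι → ℝ} {c : ℝ} (h : ∀ i j, |y i - y j| ≤ c) :
    spread y ≤ c := by
  obtain ⟨i, -, hi⟩ := exists_mem_eq_sup' univ_nonempty y
  obtain ⟨j, -, hj⟩ := exists_mem_eq_inf' univ_nonempty y
  rw [spread, hi, hj]
  exact (le_abs_self _).trans (h i j)

lemma abs_sub_average_le_spread (y : ι → ℝ) (i : ι) :
    |y i - (∑ k, y k) / Fintype.card ι| ≤ spread y := by
  have hcard : (0 : ℝ) < Fintype.card ι := by exact_mod_cast Fintype.card_pos
  have hlow : univ.inf' univ_nonempty y ≤ (∑ k, y k) / Fintype.card ι := by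
    rw [le_div_iff₀ hcard, mul_comm]
    simpa using card_nsmul_le_sum univ y _ fun k _ => inf'_le y (mem_univ k)
  have hup : (∑ k, y k) / Fintype.card ι ≤ univ.sup' univ_nonempty y := by
    rw [div_le_iff₀ hcard, mul_comm]
    simpa using sum_le_card_nsmul univ y _ fun k _ => le_sup' y (mem_univ k)
  unfold spread
  exact abs_sub_le_iff.2
    ⟨by linarith [le_sup' y (mem_univ i)], by linarith [inf'_le y (mem_univ i)]⟩

end Spread

namespace Matrix

variable {ι : Type*} [Fintype ι] [DecidableEq ι] {Q : Matrix ι ι ℝ}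

lemma mulVec_apply_le_of_mem_rowStochastic (hQ : Q ∈ rowStochastic ℝ ι) {y : ι → ℝ} {b : ℝ}
    (hy : ∀ j, y j ≤ b) (i j : ι) : (Q *ᵥ y) i ≤ b - Q i j * (b - y j) := by
  have hsplit : (Q *ᵥ y) i = b - ∑ k, Q i k * (b - y k) := by
    simp only [mulVec, dotProduct, mul_sub, sum_sub_distrib, ← sum_mul,
      sum_row_of_mem_rowStochastic hQ i]
    ring
  rw [hsplit]
  gcongr
  exact single_le_sum (f := fun k => Q i k * (b - y k))
    (fun k _ => mul_nonneg (nonneg_of_mem_rowStochastic hQ) (sub_nonneg.2 (hy k))) (mem_univ j)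

lemma le_mulVec_apply_of_mem_rowStochastic (hQ : Q ∈ rowStochastic ℝ ι) {y : ι → ℝ} {a : ℝ}
    (hy : ∀ j, a ≤ y j) (i : ι) : a ≤ (Q *ᵥ y) i := by
  have := mulVec_apply_le_of_mem_rowStochastic hQ (y := -y) (b := -a)
    (fun j => neg_le_neg (hy j)) i i
  have := mul_nonneg (nonneg_of_mem_rowStochastic hQ (i := i) (j := i)) (sub_nonneg.2 (hy i))
  simp only [mulVec_neg, Pi.neg_apply] at *
  linarith

lemma mul_le_pow_succ_apply (hQ : Q ∈ rowStochastic ℝ ι) (m : ℕ) (i k j : ι) :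
    Q i k * (Q ^ m) k j ≤ (Q ^ (m + 1)) i j := by
  rw [pow_succ', mul_apply]
  exact single_le_sum (f := fun l => Q i l * (Q ^ m) l j)
    (fun l _ => mul_nonneg (nonneg_of_mem_rowStochastic hQ)
      (nonneg_of_mem_rowStochastic (pow_mem hQ m))) (mem_univ k)

variable [Nonempty ι]

/-- Every row of `Q` puts weight at least `β` on a minimiser of `y`. -/
lemma spread_mulVec_le (hQ : Q ∈ rowStochastic ℝ ι) {β : ℝ} (hβ : ∀ i j, β ≤ Q i j)
    (y : ι → ℝ) : spread (Q *ᵥ y) ≤ (1 - β) * spread y := by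
  set a := univ.inf' univ_nonempty y
  set b := univ.sup' univ_nonempty y
  obtain ⟨j, -, hj⟩ := exists_mem_eq_inf' univ_nonempty y
  have hab : 0 ≤ b - a := spread_nonneg y
  have hup : ∀ i, (Q *ᵥ y) i ≤ b - β * (b - a) := fun i => by
    have := mulVec_apply_le_of_mem_rowStochastic hQ (b := b) (fun k => le_sup' y (mem_univ k)) i j
    rw [← hj] at this
    linarith [mul_le_mul_of_nonneg_right (hβ i j) hab]
  have hlow : ∀ i, a ≤ (Q *ᵥ y) i :=
    le_mulVec_apply_of_mem_rowStochastic hQ (y := y) fun k => inf'_le y (mem_univ k)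
  have := sup'_le univ_nonempty _ fun i _ => hup i
  have := le_inf' univ_nonempty _ fun i _ => hlow i
  unfold spread
  linarith

lemma spread_mulVec_le_spread (hQ : Q ∈ rowStochastic ℝ ι) (y : ι → ℝ) :
    spread (Q *ᵥ y) ≤ spread y := by
  simpa using spread_mulVec_le hQ (fun _ _ => nonneg_of_mem_rowStochastic hQ) y

lemma spread_pow_mulVec_le (hQ : Q ∈ rowStochastic ℝ ι) {β : ℝ} (hβ : ∀ i j, β ≤ Q i j)
    (y : ι → ℝ) (q : ℕ) : spread (Q ^ q *ᵥ y) ≤ (1 - β) ^ q * spread y := by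
  obtain ⟨i⟩ := ‹Nonempty ι›
  have hβ1 : 0 ≤ 1 - β := sub_nonneg.2 ((hβ i i).trans (le_one_of_mem_rowStochastic hQ))
  induction q with
  | zero => simp
  | succ q ih =>
    calc spread (Q ^ (q + 1) *ᵥ y) = spread (Q *ᵥ (Q ^ q *ᵥ y)) := by
          rw [mulVec_mulVec, pow_succ']
      _ ≤ (1 - β) * spread (Q ^ q *ᵥ y) := spread_mulVec_le hQ hβ _
      _ ≤ (1 - β) * ((1 - β) ^ q * spread y) := by gcongr
      _ = (1 - β) ^ (q + 1) * spread y := by ring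

lemma tendsto_spread_pow_mulVec (hQ : Q ∈ rowStochastic ℝ ι) {m : ℕ} (hm : 0 < m) {β : ℝ}
    (hβ : 0 < β) (hβm : ∀ i j, β ≤ (Q ^ m) i j) (y : ι → ℝ) :
    Tendsto (fun k => spread (Q ^ k *ᵥ y)) atTop (𝓝 0) := by
  obtain ⟨i⟩ := ‹Nonempty ι›
  have hQm := pow_mem hQ m
  have hβ1 : β ≤ 1 := (hβm i i).trans (le_one_of_mem_rowStochastic hQm)
  have hbound (k : ℕ) : spread (Q ^ k *ᵥ y) ≤ (1 - β) ^ (k / m) * spread y :=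
    calc spread (Q ^ k *ᵥ y) = spread (Q ^ (k % m) *ᵥ ((Q ^ m) ^ (k / m) *ᵥ y)) := by
          rw [mulVec_mulVec, ← pow_mul, ← pow_add, Nat.mod_add_div]
      _ ≤ spread ((Q ^ m) ^ (k / m) *ᵥ y) := spread_mulVec_le_spread (pow_mem hQ _) _
      _ ≤ (1 - β) ^ (k / m) * spread y := spread_pow_mulVec_le hQm hβm y _
  refine squeeze_zero (fun k => spread_nonneg _) hbound ?_
  have := (tendsto_pow_atTop_nhds_zero_of_lt_one (r := 1 - β) (by linarith) (by linarith)).comp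
    (Nat.tendsto_div_const_atTop hm.ne')
  simpa using this.mul_const (spread y)

end Matrix

namespace SimpleGraph

variable {ι : Type*} [Fintype ι] [DecidableEq ι] {Q : Matrix ι ι ℝ} {G : SimpleGraph ι} {α : ℝ}

/-- A walk of length `≤ m`, padded with loops, is a path of exactly `m` steps of weight
`≥ α` each. -/
lemma pow_le_pow_apply_of_walk (hQ : Q ∈ rowStochastic ℝ ι) (hα : 0 ≤ α)
    (hdiag : ∀ i, α ≤ Q i i) (hadj : ∀ i j, G.Adj i j → α ≤ Q i j) {m : ℕ} :
    ∀ {i j : ι} (w : G.Walk i j), w.length ≤ m → α ^ m ≤ (Q ^ m) i j := by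
  induction m with
  | zero =>
    intro i j w hw
    obtain rfl := w.eq_of_length_eq_zero (Nat.le_zero.1 hw)
    simp
  | succ m ih =>
    intro i j w hw
    obtain ⟨k, w', hw', hik⟩ : ∃ k, ∃ w' : G.Walk k j, w'.length ≤ m ∧ α ≤ Q i k := by
      cases w with
      | nil => exact ⟨i, .nil, Nat.zero_le m, hdiag i⟩
      | cons h p => exact ⟨_, p, by simpa using hw, hadj _ _ h⟩
    calc α ^ (m + 1) = α * α ^ m := pow_succ' α m
      _ ≤ Q i k * (Q ^ m) k j := mul_le_mul hik (ih w' hw') (pow_nonneg hα m) (hα.trans hik)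
      _ ≤ (Q ^ (m + 1)) i j := mul_le_pow_succ_apply hQ m i k j

lemma Connected.pow_card_le_pow_card_apply (hG : G.Connected) (hQ : Q ∈ rowStochastic ℝ ι)
    (hα : 0 ≤ α) (hdiag : ∀ i, α ≤ Q i i) (hadj : ∀ i j, G.Adj i j → α ≤ Q i j) (i j : ι) :
    α ^ Fintype.card ι ≤ (Q ^ Fintype.card ι) i j :=
  pow_le_pow_apply_of_walk hQ hα hdiag hadj _ (hG.preconnected i j).some.bypass_isPath.length_lt.le

variable (G) [DecidableRel G.Adj]

lemma sum_lapMatrix_mulVec (y : ι → ℝ) : ∑ i, (G.lapMatrix ℝ *ᵥ y) i = 0 := by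
  calc ∑ i, (G.lapMatrix ℝ *ᵥ y) i = 1 ⬝ᵥ (G.lapMatrix ℝ *ᵥ y) := (one_dotProduct _).symm
    _ = (G.lapMatrix ℝ *ᵥ 1) ⬝ᵥ y := by
      rw [dotProduct_mulVec, ← mulVec_transpose, (G.isSymm_lapMatrix ℝ).eq]
    _ = 0 := by rw [Pi.one_def, lapMatrix_mulVec_const_eq_zero, zero_dotProduct]

/-- The expected effect of swapping the values at the two ends of a uniformly random edge. -/
noncomputable def edgeSwapMatrix : Matrix ι ι ℝ :=
  1 - (#G.edgeFinset : ℝ)⁻¹ • G.lapMatrix ℝ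

lemma edgeSwapMatrix_apply_self (i : ι) :
    G.edgeSwapMatrix i i = 1 - G.degree i / #G.edgeFinset := by
  simp [edgeSwapMatrix, lapMatrix, degMatrix, div_eq_inv_mul]

lemma edgeSwapMatrix_apply_of_ne {i j : ι} (hij : i ≠ j) :
    G.edgeSwapMatrix i j = if G.Adj i j then (#G.edgeFinset : ℝ)⁻¹ else 0 := by
  simp [edgeSwapMatrix, lapMatrix, degMatrix, hij, adjMatrix_apply]

lemma edgeSwapMatrix_mem_rowStochastic : G.edgeSwapMatrix ∈ rowStochastic ℝ ι := by
  refine mem_rowStochastic.2 ⟨fun i j => ?_, ?_⟩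
  · rcases eq_or_ne i j with rfl | hij
    · rw [edgeSwapMatrix_apply_self, sub_nonneg]
      exact div_le_one_of_le₀ (by exact_mod_cast G.degree_le_card_edgeFinset i) (Nat.cast_nonneg _)
    · rw [edgeSwapMatrix_apply_of_ne G hij]
      split_ifs <;> positivity
  · rw [edgeSwapMatrix, sub_mulVec, one_mulVec, smul_mulVec, Pi.one_def,
      lapMatrix_mulVec_const_eq_zero, smul_zero, sub_zero]

variable {G} in
lemma Connected.pow_card_le_pow_card_edgeSwapMatrix_apply (hG : G.Connected)
    (hdeg : ∀ i, G.degree i < #G.edgeFinset) (i j : ι) :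
    (#G.edgeFinset : ℝ)⁻¹ ^ Fintype.card ι ≤ (G.edgeSwapMatrix ^ Fintype.card ι) i j := by
  obtain ⟨v⟩ := hG.nonempty
  have hE : (0 : ℝ) < #G.edgeFinset := by exact_mod_cast (Nat.zero_le _).trans_lt (hdeg v)
  refine hG.pow_card_le_pow_card_apply (edgeSwapMatrix_mem_rowStochastic G) (by positivity)
    (fun k => ?_) (fun k l hkl => ?_) i j
  · have : (G.degree k : ℝ) + 1 ≤ #G.edgeFinset := by exact_mod_cast hdeg k
    rw [edgeSwapMatrix_apply_self, le_sub_iff_add_le, inv_eq_one_div, ← add_div,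
      div_le_one hE]
    linarith
  · rw [edgeSwapMatrix_apply_of_ne G hkl.ne, if_pos hkl]

end SimpleGraph

/-- If `v` met every edge, connectedness would make `G` the star centred at `v`. -/
lemma degree_lt_card_edgeFinset_of_not_isStar {n : ℕ} {G : SimpleGraph (Fin n)}
    (hG : G.Connected) (hstar : ¬ IsStar G) (v : Fin n) : G.degree v < #G.edgeFinset := by
  refine (G.degree_le_card_edgeFinset v).lt_of_ne fun hv => hstar ⟨v, fun a b => ?_⟩
  have hinc : G.incidenceFinset v = G.edgeFinset :=
    eq_of_subset_of_card_le (G.incidenceFinset_subset v)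
      (by rw [SimpleGraph.card_incidenceFinset_eq_degree, hv])
  have hmem {a b : Fin n} (hab : G.Adj a b) : a = v ∨ b = v := by
    have : s(a, b) ∈ G.incidenceFinset v := hinc ▸ G.mem_edgeFinset.2 hab
    rw [SimpleGraph.mem_incidenceFinset] at this
    simpa [eq_comm] using this.2
  have hcenter (w : Fin n) (hw : w ≠ v) : G.Adj v w := by
    have : Nontrivial (Fin n) := ⟨⟨w, v, hw⟩⟩
    obtain ⟨u, hwu⟩ :=
      (G.degree_pos_iff_exists_adj w).1 (hG.preconnected.degree_pos_of_nontrivial w)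
    rcases hmem hwu with rfl | rfl
    · exact absurd rfl hw
    · exact hwu.symm
  refine ⟨fun hab => ⟨hmem hab, hab.ne⟩, ?_⟩
  rintro ⟨rfl | rfl, hab⟩
  · exact hcenter b hab.symm
  · exact (hcenter a hab).symm

section Game

variable {n : ℕ} {G : SimpleGraph (Fin n)} {x : ℕ → Fin n → ℝ} {ε : ℝ}

lemma Nb_eq_neighborFinset (t : ℕ) (i : Fin n) :
    Nb G x ε t i = (Gt G x ε t).neighborFinset i := by
  ext j
  simp [Nb]

lemma Gt_eq_of_abs_sub_le {t : ℕ} (h : ∀ i j, |x t i - x t j| ≤ ε) : Gt G x ε t = G := by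
  ext i j
  exact ⟨fun hij => hij.1, fun hij => ⟨hij, h i j⟩⟩

lemma Update.eq_sub_lapMatrix_mulVec (hupd : Update G x ε) (t : ℕ) :
    x (t + 1) = x t - ((if (Gt G x ε t).edgeSet.Nonempty then 1 else 0) / (Ecard G x ε t : ℝ)) •
      ((Gt G x ε t).lapMatrix ℝ *ᵥ x t) := by
  funext i
  rw [hupd t i, Nb_eq_neighborFinset, SimpleGraph.card_neighborFinset_eq_degree]
  simp only [Pi.sub_apply, Pi.smul_apply, smul_eq_mul, SimpleGraph.lapMatrix_mulVec_apply]
  ring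

lemma Update.sum_eq (hupd : Update G x ε) (t : ℕ) : ∑ i, x t i = ∑ i, x 0 i := by
  induction t with
  | zero => rfl
  | succ t ih =>
    rw [← ih, hupd.eq_sub_lapMatrix_mulVec t]
    simp only [Pi.sub_apply, Pi.smul_apply, smul_eq_mul, sum_sub_distrib, ← mul_sum,
      SimpleGraph.sum_lapMatrix_mulVec, mul_zero, sub_zero]

lemma Update.eq_edgeSwapMatrix_mulVec (hupd : Update G x ε) (hE : 0 < #G.edgeFinset) {t : ℕ}
    (h : ∀ i j, |x t i - x t j| ≤ ε) : x (t + 1) = G.edgeSwapMatrix *ᵥ x t := by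
  have hEcard : Ecard G x ε t = #G.edgeFinset := by
    rw [Ecard, Gt_eq_of_abs_sub_le h, ← SimpleGraph.coe_edgeFinset, Set.ncard_coe_finset]
  have hne : (Gt G x ε t).edgeSet.Nonempty := by
    rw [Gt_eq_of_abs_sub_le h, ← SimpleGraph.coe_edgeFinset, coe_nonempty]
    exact card_pos.1 hE
  rw [hupd.eq_sub_lapMatrix_mulVec t, if_pos hne, hEcard, Gt_eq_of_abs_sub_le h,
    SimpleGraph.edgeSwapMatrix, sub_mulVec, one_mulVec, smul_mulVec, one_div]

/-- The threshold graph stays `G` because the spread does not grow. -/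
lemma Update.eq_pow_mulVec (hupd : Update G x ε) (hE : 0 < #G.edgeFinset) {s : ℕ}
    (htriv : ∀ i j, |x s i - x s j| ≤ ε) (k : ℕ) :
    x (s + k) = G.edgeSwapMatrix ^ k *ᵥ x s := by
  induction k with
  | zero => simp
  | succ k ih =>
    have htriv' (i j : Fin n) : |x (s + k) i - x (s + k) j| ≤ ε := by
      have : Nonempty (Fin n) := ⟨i⟩
      refine (abs_sub_le_spread _ i j).trans ?_
      rw [ih]
      exact (spread_mulVec_le_spread (pow_mem G.edgeSwapMatrix_mem_rowStochastic k) _).trans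
        (spread_le_of_abs_sub_le htriv)
    rw [← add_assoc, hupd.eq_edgeSwapMatrix_mulVec hE htriv', ih, mulVec_mulVec, ← pow_succ']

end Game

theorem convergence_to_average_general {n : ℕ} (G : SimpleGraph (Fin n)) (x : ℕ → Fin n → ℝ)
    (ε : ℝ) (hupd : Update G x ε)
    (hconn : G.Connected) (hstar : ¬ IsStar G)
    (s : ℕ) (htriv : ∀ i j, |x s i - x s j| ≤ ε) :
    ∀ i : Fin n, Filter.Tendsto (fun t => x t i) Filter.atTop
      (nhds ((∑ k, x 0 k) / (n : ℝ))) := by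
  have : Nonempty (Fin n) := hconn.nonempty
  have hdeg := degree_lt_card_edgeFinset_of_not_isStar hconn hstar
  have hE : 0 < #G.edgeFinset := (Nat.zero_le _).trans_lt (hdeg (Classical.arbitrary _))
  have hspread : Tendsto (fun k => spread (x (s + k))) atTop (𝓝 0) := by
    simp_rw [hupd.eq_pow_mulVec hE htriv]
    exact tendsto_spread_pow_mulVec G.edgeSwapMatrix_mem_rowStochastic Fintype.card_pos
      (pow_pos (inv_pos.2 (Nat.cast_pos.2 hE)) _)
      (hconn.pow_card_le_pow_card_edgeSwapMatrix_apply hdeg) _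
  intro i
  rw [← tendsto_add_atTop_iff_nat s]
  refine tendsto_iff_dist_tendsto_zero.2 (squeeze_zero (fun _ => dist_nonneg) (fun k => ?_) hspread)
  rw [add_comm k s]
  have := abs_sub_average_le_spread (x (s + k)) i
  rwa [hupd.sum_eq, Fintype.card_fin, ← Real.dist_eq] at this

/-- Theorem 1: on a connected non-star social graph, if `G_s` is ε-trivial at some time
`s`, then every `x_i(t)` converges to the initial average. -/
theorem convergence_to_average {n : ℕ} (G : SimpleGraph (Fin n)) (x : ℕ → Fin n → ℝ)
    (ε : ℝ) (hε : 0 < ε) (hx0 : ∀ i, 0 ≤ x 0 i) (hupd : Update G x ε)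
    (hconn : G.Connected) (hstar : ¬ IsStar G)
    (s : ℕ) (htriv : ∀ i j, |x s i - x s j| ≤ ε) :
    ∀ i : Fin n, Filter.Tendsto (fun t => x t i) Filter.atTop
      (nhds ((∑ k, x 0 k) / (n : ℝ))) :=
  convergence_to_average_general G x ε hupd hconn hstar s htriv
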